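/- arXiv:2307.05712 — 2 statements merged into one kernel-verified Lean document; each statement's English description precedes it below -/
import Mathlib

section
/- Let F ∈ ℤ[x,y], and suppose there exist a polynomial 𝔉 ∈ ℚ[t] of degree d ≥ 2 and a polynomial G ∈ ℚ[x,y] such that F = 𝔉 ∘ G. Then there is a constant c > 0 such that for all sufficiently large positive integers N, the number of integers in [N, 2N] which are values of F at integer points is at most c · N^{1/d}. -/
/-!
Write `F = P ∘ G`. The values of `G` at integer points have a bounded denominator `D`, so every
value of `F` in `[N, 2N]` is `P(k / D)` for some integer `k`. Since `|t|^d ≪ 1 + |P(t)|`, these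
`k` satisfy `|k| ≪ N^{1/d}`, and there are `≪ N^{1/d}` of them.
-/

open Filter

theorem Polynomial.exists_norm_pow_natDegree_le {R : Type*} [NormedRing R] [NormMulClass R]
    [NormOneClass R] {P : Polynomial R} (hP : P ≠ 0) :
    ∃ A > 0, ∀ x : R, ‖x‖ ^ P.natDegree ≤ A * (1 + ‖P.eval x‖) := by
  have : Nontrivial R := Nontrivial.of_polynomial_ne hP
  obtain ⟨c, hc, hbig⟩ := (isBigO_cobounded_of_degree_le (P := X ^ P.natDegree) (Q := P)
    (by rw [degree_X_pow, degree_eq_natDegree hP])).exists_pos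
  obtain ⟨r, -, hr⟩ := (hasBasis_cobounded_norm (E := R)).eventually_iff.mp hbig.bound
  have hr₀ := pow_nonneg (abs_nonneg r) P.natDegree
  refine ⟨c + |r| ^ P.natDegree, by positivity, fun x ↦ ?_⟩
  have hPx := norm_nonneg (P.eval x)
  rcases le_or_gt r ‖x‖ with hx | hx
  · have hxP : ‖x‖ ^ P.natDegree ≤ c * ‖P.eval x‖ := by simpa [eval_X_pow] using hr hx
    nlinarith
  · have hxr := pow_le_pow_left₀ (norm_nonneg x) (hx.le.trans (le_abs_self r)) P.natDegree
    nlinarith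

theorem Polynomial.exists_norm_le_of_norm_eval_le {R : Type*} [NormedRing R] [NormMulClass R]
    [NormOneClass R] {P : Polynomial R} (hP : 0 < P.natDegree) :
    ∃ B > 0, ∀ (x : R) (N : ℝ), 1 ≤ N → ‖P.eval x‖ ≤ N →
      ‖x‖ ≤ B * N ^ (1 / (P.natDegree : ℝ)) := by
  obtain ⟨A, hA, hAx⟩ := exists_norm_pow_natDegree_le (ne_zero_of_natDegree_gt hP)
  refine ⟨(2 * A) ^ (1 / (P.natDegree : ℝ)), by positivity, fun x N hN hxN ↦ ?_⟩
  have hpow : ‖x‖ ^ (P.natDegree : ℝ) ≤ 2 * A * N := by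
    rw [Real.rpow_natCast]
    nlinarith [hAx x]
  rw [← Real.mul_rpow (by positivity) (by positivity), one_div,
    Real.le_rpow_inv_iff_of_pos (norm_nonneg x) (by positivity) (by positivity)]
  exact hpow

theorem Int.setOf_abs_le_eq_Icc (r : ℝ) : {k : ℤ | |(k : ℝ)| ≤ r} = Set.Icc (-⌊r⌋) ⌊r⌋ := by
  ext k
  simp only [Set.mem_ofPred_eq, Set.mem_Icc, abs_le, Int.le_floor, neg_le, Int.cast_neg]

theorem Int.ncard_setOf_abs_le_le {r : ℝ} (hr : 0 ≤ r) :
    ({k : ℤ | |(k : ℝ)| ≤ r}.ncard : ℝ) ≤ 2 * r + 1 := by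
  have hfloor : 0 ≤ ⌊r⌋ := Int.floor_nonneg.mpr hr
  rw [Int.setOf_abs_le_eq_Icc, ← Finset.coe_Icc, Set.ncard_coe_finset, Int.card_Icc,
    ← Int.cast_natCast, Int.toNat_of_nonneg (by omega)]
  push_cast
  linarith [Int.floor_le r]

theorem Polynomial.exists_ncard_le_of_subset_eval_intCast_div {P : Polynomial ℚ}
    (hP : 0 < P.natDegree) {D : ℕ} (hD : 0 < D) :
    ∃ B > 0, ∀ N : ℝ, 1 ≤ N → ∀ s : Set ℚ,
      s ⊆ {q | |(q : ℝ)| ≤ N ∧ ∃ k : ℤ, P.eval ((k : ℚ) / D) = q} →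
      (s.ncard : ℝ) ≤ B * N ^ (1 / (P.natDegree : ℝ)) := by
  obtain ⟨B, hB, hBx⟩ := exists_norm_le_of_norm_eval_le hP
  refine ⟨2 * D * B + 1, by positivity, fun N hN s hs ↦ ?_⟩
  have hN' : 1 ≤ N ^ (1 / (P.natDegree : ℝ)) := Real.one_le_rpow hN (by positivity)
  set r := D * B * N ^ (1 / (P.natDegree : ℝ))
  have hsub : s ⊆ (fun k : ℤ ↦ P.eval ((k : ℚ) / D)) '' {k : ℤ | |(k : ℝ)| ≤ r} := by
    rintro _ hq
    obtain ⟨hqN, k, rfl⟩ := hs hq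
    refine ⟨k, ?_, rfl⟩
    have hk := hBx (k / D) N hN (by rwa [← Rat.norm_cast_real, Real.norm_eq_abs])
    rw [← Rat.norm_cast_real, Real.norm_eq_abs] at hk
    push_cast at hk
    rw [abs_div, Nat.abs_cast, div_le_iff₀ (by positivity)] at hk
    simp only [Set.mem_ofPred_eq, r]
    linarith
  have hfin : {k : ℤ | |(k : ℝ)| ≤ r}.Finite := by
    rw [Int.setOf_abs_le_eq_Icc]
    exact Set.finite_Icc _ _
  calc (s.ncard : ℝ)
      ≤ ((fun k : ℤ ↦ P.eval ((k : ℚ) / D)) '' {k : ℤ | |(k : ℝ)| ≤ r}).ncard :=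
        Nat.cast_le.mpr (Set.ncard_le_ncard hsub (hfin.image _))
    _ ≤ {k : ℤ | |(k : ℝ)| ≤ r}.ncard := Nat.cast_le.mpr (Set.ncard_image_le hfin)
    _ ≤ 2 * r + 1 := Int.ncard_setOf_abs_le_le (by positivity)
    _ ≤ (2 * D * B + 1) * N ^ (1 / (P.natDegree : ℝ)) := by nlinarith

theorem MvPolynomial.exists_nat_mul_eval_eq_intCast {σ : Type*} (G : MvPolynomial σ ℚ) :
    ∃ D : ℕ, 0 < D ∧ ∀ v : σ → ℤ, ∃ k : ℤ, D * eval (fun i ↦ (v i : ℚ)) G = k := by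
  induction G using MvPolynomial.induction_on with
  | C q => exact ⟨q.den, q.pos, fun _ ↦ ⟨q.num, by simp [Rat.den_mul_eq_num]⟩⟩
  | add p q hp hq =>
    obtain ⟨D₁, hD₁, h₁⟩ := hp
    obtain ⟨D₂, hD₂, h₂⟩ := hq
    refine ⟨D₁ * D₂, by positivity, fun v ↦ ?_⟩
    obtain ⟨k₁, hk₁⟩ := h₁ v
    obtain ⟨k₂, hk₂⟩ := h₂ v
    refine ⟨D₂ * k₁ + D₁ * k₂, ?_⟩
    push_cast
    rw [map_add, ← hk₁, ← hk₂]
    ring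
  | mul_X p i hp =>
    obtain ⟨D, hD, h⟩ := hp
    refine ⟨D, hD, fun v ↦ ?_⟩
    obtain ⟨k, hk⟩ := h v
    refine ⟨k * v i, ?_⟩
    push_cast
    rw [map_mul, eval_X, ← hk]
    ring

theorem MvPolynomial.eval_aeval {σ R : Type*} [CommSemiring R] (x : σ → R)
    (G : MvPolynomial σ R) (P : Polynomial R) :
    eval x (Polynomial.aeval G P) = P.eval (eval x G) := by
  simpa only [aeval_eq_eval, Polynomial.coe_aeval_eq_eval] using
    (Polynomial.aeval_algHom_apply (aeval x) G P).symm

/-- **Lemma 2.1.** If `F ∈ ℤ[x,y]` can be written as `F = 𝔉 ∘ G` with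
`𝔉 ∈ ℚ[t]` of degree `d ≥ 2` and `G ∈ ℚ[x,y]`, then `#ℛ_F([N, 2N]) ≪ N^{1/d}`. -/
theorem composed_value_density
    (F : MvPolynomial (Fin 2) ℤ) (d : ℕ) (hd : 2 ≤ d)
    (P : Polynomial ℚ) (hP : P.natDegree = d)
    (G : MvPolynomial (Fin 2) ℚ)
    (hcomp : MvPolynomial.map (Int.castRingHom ℚ) F = Polynomial.aeval G P) :
    ∃ c : ℝ, 0 < c ∧ ∀ᶠ N : ℕ in Filter.atTop,
      ({m : ℤ | (N : ℤ) ≤ m ∧ m ≤ 2 * N ∧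
          ∃ x y : ℤ, MvPolynomial.eval ![x, y] F = m}.ncard : ℝ)
        ≤ c * (N : ℝ) ^ (1 / (d : ℝ)) := by
  subst hP
  obtain ⟨D, hD, hden⟩ := G.exists_nat_mul_eval_eq_intCast
  obtain ⟨B, hB, hcount⟩ := P.exists_ncard_le_of_subset_eval_intCast_div (by omega) hD
  refine ⟨2 * B, by positivity, ?_⟩
  filter_upwards [eventually_ge_atTop 1] with N hN
  have hN₁ : (1 : ℝ) ≤ N := by exact_mod_cast hN
  set S := {m : ℤ | (N : ℤ) ≤ m ∧ m ≤ 2 * N ∧ ∃ x y : ℤ, MvPolynomial.eval ![x, y] F = m}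
  have hsub : Int.cast '' S ⊆
      {q : ℚ | |(q : ℝ)| ≤ 2 * N ∧ ∃ k : ℤ, P.eval ((k : ℚ) / D) = q} := by
    rintro _ ⟨m, ⟨hNm, hm, x, y, rfl⟩, rfl⟩
    obtain ⟨k, hk⟩ := hden ![x, y]
    refine ⟨?_, k, ?_⟩
    · rw [Rat.cast_intCast]
      exact_mod_cast abs_le.mpr ⟨by omega, hm⟩
    · rw [← hk, mul_div_cancel_left₀ _ (by positivity), ← MvPolynomial.eval_aeval, ← hcomp,
        MvPolynomial.eval_map]
      exact (MvPolynomial.eval₂_comp (Int.castRingHom ℚ) _ F).symm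
  have hd₁ : (1 : ℝ) ≤ P.natDegree := by exact_mod_cast (by omega : 1 ≤ P.natDegree)
  have h2pow : (2 : ℝ) ^ (1 / (P.natDegree : ℝ)) ≤ 2 :=
    Real.rpow_le_self_of_one_le one_le_two (div_le_one_of_le₀ hd₁ (by positivity))
  calc (S.ncard : ℝ) = (Int.cast '' S : Set ℚ).ncard := by
        rw [Set.ncard_image_of_injective _ Int.cast_injective]
    _ ≤ B * (2 * N) ^ (1 / (P.natDegree : ℝ)) := hcount _ (by linarith) _ hsub
    _ ≤ 2 * B * N ^ (1 / (P.natDegree : ℝ)) := by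
        rw [Real.mul_rpow (by norm_num) (by positivity), mul_comm 2 B, mul_assoc]
        gcongr
end

section
/- Let F ∈ ℤ[x,y] have total degree 4 with F(0,0) = 0, and write F = F_4 + F_3 + F_2 + F_1 where F_i is the homogeneous degree-i part. If F_4 is negative semi-definite or indefinite, then the infimum of F(x,y) over (x,y) ∈ ℤ² is −∞, i.e., for every M there is (x,y) ∈ ℤ² with F(x,y) < −M. -/
/-- Evaluation of an integer polynomial in two variables at a real point. -/
noncomputable def evalReal (G : MvPolynomial (Fin 2) ℤ) (x y : ℝ) : ℝ :=
  MvPolynomial.aeval ![x, y] G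

/-- Negative semi-definite: nonpositive at every real point. -/
def NegSemidef2 (G : MvPolynomial (Fin 2) ℤ) : Prop :=
  ∀ x y : ℝ, evalReal G x y ≤ 0

/-- Indefinite: takes both positive and negative values on `ℝ² \ {(0,0)}`. -/
def Indefinite2 (G : MvPolynomial (Fin 2) ℤ) : Prop :=
  (∃ x y : ℝ, (x, y) ≠ (0, 0) ∧ 0 < evalReal G x y) ∧
  (∃ x y : ℝ, (x, y) ≠ (0, 0) ∧ evalReal G x y < 0)

/-!
Along the ray through an integer point `v`, `F (t • v) = ∑ tⁱ Fᵢ(v)` is a polynomial in `t` whose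
leading coefficient is `F₄(v)`, so it suffices to find `v ∈ ℤ²` with `F₄(v) < 0`. In both cases
`F₄` is negative somewhere on `ℝ²` (a nonzero form is not identically zero there, as `ℝ` is
infinite), and `{F₄ < 0}` is an open cone, so it contains balls of every radius and hence a
lattice point.
-/

open MvPolynomial Finset

namespace MvPolynomial

variable {σ R : Type*} [CommSemiring R]

theorem IsHomogeneous.eval_smul {p : MvPolynomial σ R} {n : ℕ} (hp : p.IsHomogeneous n)
    (c : R) (v : σ → R) : eval (c • v) p = c ^ n * eval v p := by
  rw [eval_eq, eval_eq, mul_sum]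
  refine sum_congr rfl fun d hd => ?_
  have hdeg : ∑ i ∈ d.support, d i = n := by
    simpa [Finsupp.weight_apply, Finsupp.sum] using hp (mem_support_iff.1 hd)
  simp only [Pi.smul_apply, smul_eq_mul, mul_pow, prod_mul_distrib, prod_pow_eq_pow_sum, hdeg]
  ring

theorem eval_smul_eq_sum_homogeneousComponent (p : MvPolynomial σ R) (c : R) (v : σ → R) :
    eval (c • v) p =
      ∑ i ∈ range (p.totalDegree + 1), c ^ i * eval v (homogeneousComponent i p) := by
  conv_lhs => rw [← sum_homogeneousComponent p]
  simp only [map_sum, (homogeneousComponent_isHomogeneous _ p).eval_smul]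

theorem homogeneousComponent_totalDegree_ne_zero {p : MvPolynomial σ R} (hp : p ≠ 0) :
    homogeneousComponent p.totalDegree p ≠ 0 := by
  obtain ⟨d, hd, hdeg⟩ := exists_mem_eq_sup p.support (support_nonempty.2 hp) Finsupp.degree
  have hcoeff : coeff d (homogeneousComponent p.totalDegree p) = coeff d p := by
    rw [coeff_homogeneousComponent, if_pos]
    exact hdeg.symm
  exact fun h => mem_support_iff.1 hd (by rw [← hcoeff, h, coeff_zero])

theorem exists_aeval_ne_zero {S : Type*} [CommRing S] [IsDomain S] [Infinite S] [Algebra R S]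
    (hinj : Function.Injective (algebraMap R S)) {p : MvPolynomial σ R} (hp : p ≠ 0) :
    ∃ x : σ → S, aeval x p ≠ 0 := by
  by_contra! h
  refine hp (map_injective _ hinj (funext fun x => ?_))
  simpa [eval_map, aeval_def] using h x

end MvPolynomial

theorem IsOpen.exists_intCast_mem_of_smul_mem {σ : Type*} [Fintype σ] {U : Set (σ → ℝ)}
    (hU : IsOpen U) (hne : U.Nonempty) (hcone : ∀ t : ℝ, 0 < t → ∀ x ∈ U, t • x ∈ U) :
    ∃ v : σ → ℤ, (fun i => (v i : ℝ)) ∈ U := by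
  obtain ⟨x, hx⟩ := hne
  obtain ⟨r, hr, hball⟩ := Metric.isOpen_iff.1 hU x hx
  -- `r⁻¹ • ball x r` is a sup-norm ball of radius `1`: round the coordinates of its centre.
  refine ⟨fun i => round (r⁻¹ * x i), ?_⟩
  have hmem : r • (fun i => (round (r⁻¹ * x i) : ℝ)) ∈ Metric.ball x r := by
    rw [Metric.mem_ball, dist_pi_lt_iff hr]
    intro i
    simp only [Pi.smul_apply, smul_eq_mul, Real.dist_eq]
    obtain ⟨y, hy⟩ : ∃ y, r⁻¹ * x i = y := ⟨_, rfl⟩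
    have hxy : x i = r * y := by rw [← hy]; field_simp
    rw [hy, hxy, ← mul_sub, abs_mul, abs_of_pos hr, abs_sub_comm]
    nlinarith [abs_sub_round y]
  simpa [smul_smul, hr.ne'] using hcone r⁻¹ (inv_pos.2 hr) _ (hball hmem)

theorem MvPolynomial.IsHomogeneous.exists_eval_neg_of_aeval_neg {σ : Type*} [Fintype σ]
    {p : MvPolynomial σ ℤ} {n : ℕ} (hp : p.IsHomogeneous n) {x : σ → ℝ}
    (hx : MvPolynomial.aeval x p < 0) : ∃ v : σ → ℤ, eval v p < 0 := by
  set q := map (Int.castRingHom ℝ) p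
  have hU : IsOpen {y : σ → ℝ | eval y q < 0} := isOpen_lt (continuous_eval q) continuous_const
  have hcone : ∀ t : ℝ, 0 < t → ∀ y ∈ {y : σ → ℝ | eval y q < 0}, t • y ∈ {y | eval y q < 0} :=
    fun t ht y hy => by
      rw [Set.mem_ofPred_eq, (hp.map _).eval_smul]
      exact mul_neg_of_pos_of_neg (pow_pos ht n) hy
  have hxq : eval x q < 0 := by rwa [eval_map, ← algebraMap_int_eq, ← aeval_def]
  obtain ⟨v, hv⟩ := hU.exists_intCast_mem_of_smul_mem ⟨x, hxq⟩ hcone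
  have hcast : eval (fun i => (v i : ℝ)) q = eval v p := by
    rw [eval_map, ← RingHom.comp_id (Int.castRingHom ℝ)]
    exact (eval₂_comp_left _ (RingHom.id ℤ) v p).symm
  exact ⟨v, Int.cast_lt_zero.1 (hcast ▸ Set.mem_ofPred_eq ▸ hv)⟩

theorem exists_sum_range_pow_mul_lt (c : ℕ → ℤ) (n : ℕ) (hc : c (n + 1) < 0) (M : ℤ) :
    ∃ t : ℤ, ∑ i ∈ range (n + 2), t ^ i * c i < M := by
  set A := ∑ i ∈ range (n + 1), |c i|
  set t := 1 + |M| + A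
  have ht : 1 ≤ t := by
    linarith [abs_nonneg M, sum_nonneg fun i (_ : i ∈ range (n + 1)) => abs_nonneg (c i)]
  have hlow : ∑ i ∈ range (n + 1), t ^ i * c i ≤ t ^ n * A := by
    rw [mul_sum]
    refine sum_le_sum fun i hi => ?_
    calc t ^ i * c i ≤ t ^ i * |c i| := mul_le_mul_of_nonneg_left (le_abs_self _) (by positivity)
      _ ≤ t ^ n * |c i| := mul_le_mul_of_nonneg_right
          (pow_le_pow_right₀ ht (Nat.lt_succ_iff.1 (mem_range.1 hi))) (abs_nonneg _)
  have htop : t ^ (n + 1) * c (n + 1) ≤ -(t ^ n * t) := by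
    rw [← pow_succ, ← mul_neg_one]
    exact mul_le_mul_of_nonneg_left (by omega) (by positivity)
  refine ⟨t, ?_⟩
  calc ∑ i ∈ range (n + 2), t ^ i * c i ≤ t ^ n * A - t ^ n * t := by
        rw [sum_range_succ]; linarith
    _ = t ^ n * (-1 - |M|) := by ring
    _ ≤ -1 - |M| := by nlinarith [one_le_pow₀ (n := n) ht, abs_nonneg M]
    _ < M := by linarith [neg_abs_le M]

theorem negsemidef_or_indefinite_inf_neg_infty_general
    (F : MvPolynomial (Fin 2) ℤ) (hdeg : F.totalDegree = 4)
    (h4 : NegSemidef2 (MvPolynomial.homogeneousComponent 4 F) ∨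
      Indefinite2 (MvPolynomial.homogeneousComponent 4 F)) :
    ∀ M : ℤ, ∃ x y : ℤ, MvPolynomial.eval ![x, y] F < -M := by
  intro M
  have hF₄ : homogeneousComponent 4 F ≠ 0 :=
    hdeg ▸ homogeneousComponent_totalDegree_ne_zero (by rintro rfl; simp at hdeg)
  obtain ⟨x, hx⟩ : ∃ x : Fin 2 → ℝ, aeval x (homogeneousComponent 4 F) < 0 := by
    rcases h4 with hnonpos | ⟨-, x, y, -, hxy⟩
    · obtain ⟨x, hx⟩ := exists_aeval_ne_zero (algebraMap ℤ ℝ).injective_int hF₄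
      have hx₀₁ : ![x 0, x 1] = x := by funext i; fin_cases i <;> rfl
      exact ⟨x, lt_of_le_of_ne (hx₀₁ ▸ hnonpos (x 0) (x 1)) hx⟩
    · exact ⟨![x, y], hxy⟩
  obtain ⟨v, hv⟩ := (homogeneousComponent_isHomogeneous 4 F).exists_eval_neg_of_aeval_neg hx
  obtain ⟨t, ht⟩ :=
    exists_sum_range_pow_mul_lt (fun i => eval v (homogeneousComponent i F)) 3 hv (-M)
  have htv : ![t * v 0, t * v 1] = t • v := by funext i; fin_cases i <;> rfl
  refine ⟨t * v 0, t * v 1, ?_⟩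
  rwa [htv, eval_smul_eq_sum_homogeneousComponent, hdeg]

/-- **Lemma 2.3.** If `F ∈ ℤ[x,y]` has degree 4, `F(0,0) = 0`, and the
degree-4 homogeneous part `F₄` is negative semi-definite or indefinite, then
`inf_{(x,y) ∈ ℤ²} F(x,y) = -∞`. -/
theorem negsemidef_or_indefinite_inf_neg_infty
    (F : MvPolynomial (Fin 2) ℤ) (hdeg : F.totalDegree = 4)
    (h0 : MvPolynomial.eval ![0, 0] F = 0)
    (h4 : NegSemidef2 (MvPolynomial.homogeneousComponent 4 F) ∨
      Indefinite2 (MvPolynomial.homogeneousComponent 4 F)) :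
    ∀ M : ℤ, ∃ x y : ℤ, MvPolynomial.eval ![x, y] F < -M :=
  negsemidef_or_indefinite_inf_neg_infty_general F hdeg h4
end
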